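/- Let X ~ N(μ, σ²), Y ~ N(θ, σ²) be independent, σ > 0, τ ≥ 1, and set η = E[(X₀² − σ²)(Y₀² − σ²)·1{X₀² ∨ Y₀² > σ²τ}] where X₀, Y₀ are independent N(0, σ²). Then η = −4σ⁴τ·φ²(√τ), and |E[(X² − σ²)(Y² − σ²)·1{X² ∨ Y² > σ²τ}] − η − μ²θ²| ≤ min{μ², 3σ²τ}·min{θ², 3σ²τ} + 2σ²√τ·φ(√τ)·min{μ², 3σ²τ} + 2σ²√τ·φ(√τ)·min{θ², 3σ²τ}. -/

import Mathlib

/-!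
Let `F m = E[(X² - σ²) 1{X² ≤ σ²τ}]` for `X ~ N(m, σ²)`. Writing the indicator of
`{X² ∨ Y² > σ²τ}` as `1 - 1{X² ≤ σ²τ} 1{Y² ≤ σ²τ}` and using independence, the expectation
is `μ²θ² - F μ * F θ`, so it suffices to know `F 0 = -2σ²√τ φ(√τ)` and
`|F m - F 0| ≤ min (m², 3σ²τ)`; the latter is trivial with `3σ²τ` since `|F| ≤ σ²τ`.

After scaling to `σ = 1` and `a = √τ`, integrating `(x² - 1) φ(x - u)` over `[-a, a]` gives
`F` in closed form in terms of `φ` and `Φ`. Its derivative satisfies `F' ≤ 2u` for `u ≥ 0`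
(because `Φ ≤ 1` and `φ(a - u) ≥ φ(a + u)`) and `F' ≥ -2u` for `0 ≤ u ≤ 1` (by explicit
numerical bounds on `φ`), while for `u ≥ 1` the crude bounds `F u ≥ -1 ≥ F 0 - u²` suffice.
-/

open MeasureTheory ProbabilityTheory

/-- Standard normal density. -/
noncomputable def stdPhi (z : ℝ) : ℝ := (Real.sqrt (2 * Real.pi))⁻¹ * Real.exp (-z ^ 2 / 2)

open Real Set intervalIntegral
open scoped NNReal

lemma gaussianPDFReal_one_apply (u x : ℝ) : gaussianPDFReal u 1 x = stdPhi (x - u) := by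
  simp [gaussianPDFReal, stdPhi]

lemma gaussianPDFReal_zero_one : gaussianPDFReal 0 1 = stdPhi := by
  ext x; simp [gaussianPDFReal_one_apply]

lemma stdPhi_pos (x : ℝ) : 0 < stdPhi x := by
  simpa [gaussianPDFReal_one_apply] using gaussianPDFReal_pos 0 1 x one_ne_zero

lemma stdPhi_neg (x : ℝ) : stdPhi (-x) = stdPhi x := by
  simp [stdPhi]

@[fun_prop]
lemma continuous_stdPhi : Continuous stdPhi := by
  unfold stdPhi; fun_prop

lemma hasDerivAt_stdPhi (x : ℝ) : HasDerivAt stdPhi (-(x * stdPhi x)) x := by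
  have h : HasDerivAt (fun y : ℝ => -y ^ 2 / 2) (-x) x :=
    ((hasDerivAt_pow 2 x).fun_neg.div_const 2).congr_deriv (by push_cast; ring)
  exact (h.exp.const_mul (√(2 * π))⁻¹).congr_deriv (by unfold stdPhi; ring)

lemma integrable_stdPhi : Integrable stdPhi :=
  gaussianPDFReal_zero_one ▸ integrable_gaussianPDFReal 0 1

lemma integral_stdPhi : ∫ x, stdPhi x = 1 :=
  gaussianPDFReal_zero_one ▸ integral_gaussianPDFReal_eq_one 0 one_ne_zero

lemma stdPhi_le_stdPhi {x y : ℝ} (h : x ^ 2 ≤ y ^ 2) : stdPhi y ≤ stdPhi x := by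
  unfold stdPhi
  gcongr

lemma inv_sqrt_two_pi_mem : (√(2 * π))⁻¹ ∈ Icc (0.398 : ℝ) 0.4 := by
  have h1 : (2.5 : ℝ) ≤ √(2 * π) := le_sqrt_of_sq_le (by nlinarith [pi_gt_d2])
  have h2 : √(2 * π) ≤ 1 / 0.398 := sqrt_le_iff.2 ⟨by norm_num, by nlinarith [pi_lt_d2]⟩
  constructor
  · rw [le_inv_comm₀ (by norm_num) (by positivity)]; linarith
  · rw [inv_le_comm₀ (by positivity) (by norm_num)]; linarith

lemma taylor_le_exp_sq_div_two (x : ℝ) :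
    1 + x ^ 2 / 2 + x ^ 4 / 8 + x ^ 6 / 48 ≤ exp (x ^ 2 / 2) := by
  have h := sum_le_exp_of_nonneg (x := x ^ 2 / 2) (by positivity) 4
  norm_num [Finset.sum_range_succ, Nat.factorial] at h
  linarith

lemma mul_stdPhi_le_of_le {r c x : ℝ} (hc : 0 ≤ c)
    (h : r ≤ c * (1 + x ^ 2 / 2 + x ^ 4 / 8 + x ^ 6 / 48)) : r * stdPhi x ≤ 0.4 * c := by
  have hexp : exp (-x ^ 2 / 2) * exp (x ^ 2 / 2) = 1 := by rw [← exp_add]; ring_nf; simp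
  have hφ : stdPhi x * (1 + x ^ 2 / 2 + x ^ 4 / 8 + x ^ 6 / 48) ≤ 0.4 :=
    calc stdPhi x * (1 + x ^ 2 / 2 + x ^ 4 / 8 + x ^ 6 / 48)
        ≤ 0.4 * (exp (-x ^ 2 / 2) * exp (x ^ 2 / 2)) := by
          unfold stdPhi
          rw [mul_assoc]
          gcongr
          exacts [inv_sqrt_two_pi_mem.2, taylor_le_exp_sq_div_two x]
      _ = 0.4 := by rw [hexp, mul_one]
  nlinarith [stdPhi_pos x]

lemma mul_stdPhi_le (x : ℝ) : x * stdPhi x ≤ 0.26 := by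
  have := mul_stdPhi_le_of_le (r := x) (c := 0.65) (x := x) (by norm_num)
    (by nlinarith [sq_nonneg (x - 1), sq_nonneg (x ^ 2 - 1), sq_nonneg (x ^ 3 - 1), sq_nonneg x])
  linarith

lemma cubic_mul_stdPhi_le (x : ℝ) : (x ^ 3 + 2 * x ^ 2 + 2 * x) * stdPhi x ≤ 1.6 := by
  have := mul_stdPhi_le_of_le (r := x ^ 3 + 2 * x ^ 2 + 2 * x) (c := 4) (x := x) (by norm_num)
    (by nlinarith [sq_nonneg (x - 1.5), sq_nonneg (x ^ 2 - 2), sq_nonneg (x ^ 3 - 3), sq_nonneg x])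
  linarith

/-- `Φ - 1/2`, where `Φ` is the standard normal distribution function. -/
noncomputable def centeredCdf (x : ℝ) : ℝ := ∫ t in (0 : ℝ)..x, stdPhi t

lemma hasDerivAt_centeredCdf (x : ℝ) : HasDerivAt centeredCdf (stdPhi x) x :=
  (continuous_stdPhi.integral_hasStrictDerivAt 0 x).hasDerivAt

lemma centeredCdf_zero : centeredCdf 0 = 0 := integral_same

lemma centeredCdf_neg (x : ℝ) : centeredCdf (-x) = -centeredCdf x := by
  have h := integral_comp_neg (a := 0) (b := x) stdPhi
  simp only [stdPhi_neg, neg_zero] at h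
  rw [centeredCdf, centeredCdf, h, integral_symm]

lemma monotone_centeredCdf : Monotone centeredCdf :=
  monotone_of_hasDerivAt_nonneg hasDerivAt_centeredCdf fun x => (stdPhi_pos x).le

lemma centeredCdf_le_half (x : ℝ) : centeredCdf x ≤ 1 / 2 := by
  rcases le_total x 0 with hx | hx
  · linarith [monotone_centeredCdf hx, centeredCdf_zero]
  have h : centeredCdf x - centeredCdf (-x) ≤ 1 := by
    rw [centeredCdf, centeredCdf, integral_interval_sub_left
      (continuous_stdPhi.intervalIntegrable _ _) (continuous_stdPhi.intervalIntegrable _ _),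
      integral_of_le (by linarith), ← integral_stdPhi]
    exact setIntegral_le_integral integrable_stdPhi (ae_of_all _ fun t => (stdPhi_pos t).le)
  rw [centeredCdf_neg] at h
  linarith

lemma centeredCdf_one_ge : 0.33 ≤ centeredCdf 1 := by
  have h : ∀ t ∈ Icc (0 : ℝ) 1, 0.398 * (1 - t ^ 2 / 2) ≤ stdPhi t := fun t _ => by
    have := add_one_le_exp (-t ^ 2 / 2)
    have := inv_sqrt_two_pi_mem.1
    unfold stdPhi
    nlinarith [exp_pos (-t ^ 2 / 2)]
  have hint := integral_mono_on (μ := volume) zero_le_one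
    (Continuous.intervalIntegrable (by fun_prop) _ _) (continuous_stdPhi.intervalIntegrable _ _) h
  norm_num at hint
  rw [centeredCdf]
  linarith

noncomputable def truncSq (s t x : ℝ) : ℝ := if t < x ^ 2 then 0 else x ^ 2 - s

lemma measurable_truncSq (s t : ℝ) : Measurable (truncSq s t) :=
  Measurable.ite (measurableSet_lt measurable_const (by fun_prop)) measurable_const (by fun_prop)

lemma abs_truncSq_le_abs_add_abs (s t x : ℝ) : |truncSq s t x| ≤ |t| + |s| := by
  unfold truncSq
  split_ifs with h
  · rw [abs_zero]; positivity
  · exact (abs_sub _ _).trans (by rw [abs_of_nonneg (sq_nonneg x)]; linarith [le_abs_self t])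

lemma integrable_truncSq (s t : ℝ) {ν : Measure ℝ} [IsFiniteMeasure ν] :
    Integrable (truncSq s t) ν :=
  .of_bound (measurable_truncSq s t).aestronglyMeasurable (|t| + |s|)
    (ae_of_all _ (abs_truncSq_le_abs_add_abs s t))

lemma abs_truncSq_le {s t : ℝ} (hs : 0 ≤ s) (hst : s ≤ t) (x : ℝ) : |truncSq s t x| ≤ t := by
  unfold truncSq
  split_ifs with h
  · simpa using hs.trans hst
  · rw [abs_le]; constructor <;> nlinarith [sq_nonneg x]

lemma neg_le_truncSq {s : ℝ} (hs : 0 ≤ s) (t x : ℝ) : -s ≤ truncSq s t x := by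
  unfold truncSq
  split_ifs <;> nlinarith [sq_nonneg x]

lemma truncSq_sq_mul {σ : ℝ} (hσ : σ ≠ 0) (t z : ℝ) :
    truncSq (σ ^ 2) (σ ^ 2 * t) (σ * z) = σ ^ 2 * truncSq 1 t z := by
  have hσ2 : 0 < σ ^ 2 := by positivity
  simp only [truncSq, mul_pow, mul_lt_mul_iff_right₀ hσ2]
  split_ifs <;> ring

lemma ite_lt_max_sq_eq_sub (s t x y : ℝ) :
    (if t < max (x ^ 2) (y ^ 2) then (x ^ 2 - s) * (y ^ 2 - s) else 0) =
      (x ^ 2 - s) * (y ^ 2 - s) - truncSq s t x * truncSq s t y := by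
  unfold truncSq
  split_ifs <;> simp_all

lemma integral_prod_ite_lt_max_sq {ν₁ ν₂ : Measure ℝ} [IsFiniteMeasure ν₁] [IsFiniteMeasure ν₂]
    (s t : ℝ) (h₁ : Integrable (fun x => x ^ 2 - s) ν₁)
    (h₂ : Integrable (fun x => x ^ 2 - s) ν₂) :
    ∫ p : ℝ × ℝ, (if t < max (p.1 ^ 2) (p.2 ^ 2) then (p.1 ^ 2 - s) * (p.2 ^ 2 - s) else 0)
        ∂ν₁.prod ν₂ =
      (∫ x, (x ^ 2 - s) ∂ν₁) * (∫ y, (y ^ 2 - s) ∂ν₂) -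
        (∫ x, truncSq s t x ∂ν₁) * (∫ y, truncSq s t y ∂ν₂) := by
  simp_rw [ite_lt_max_sq_eq_sub]
  rw [integral_sub (h₁.mul_prod h₂) ((integrable_truncSq s t).mul_prod (integrable_truncSq s t)),
    integral_prod_mul (fun x => x ^ 2 - s) (fun y => y ^ 2 - s), integral_prod_mul]

lemma integral_sq_sub_gaussianReal (m : ℝ) (v : ℝ≥0) :
    ∫ x, (x ^ 2 - v) ∂gaussianReal m v = m ^ 2 := by
  have hX : MemLp id 2 (gaussianReal m v) := memLp_id_gaussianReal 2
  have h := variance_eq_sub hX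
  rw [variance_id_gaussianReal] at h
  simp only [Pi.pow_apply, id, integral_id_gaussianReal] at h
  have hsq : Integrable (fun x => x ^ 2) (gaussianReal m v) := hX.integrable_sq
  rw [integral_sub hsq (integrable_const _)]
  simp only [MeasureTheory.integral_const, probReal_univ, smul_eq_mul, one_mul]
  linarith

lemma integrable_sq_sub_gaussianReal (m : ℝ) (v : ℝ≥0) (s : ℝ) :
    Integrable (fun x => x ^ 2 - s) (gaussianReal m v) :=
  (memLp_id_gaussianReal 2).integrable_sq.sub (integrable_const s)

lemma gaussianReal_map_const_mul_div {σ : ℝ} (hσ : σ ≠ 0) (m : ℝ) :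
    (gaussianReal (m / σ) 1).map (σ * ·) = gaussianReal m (σ ^ 2).toNNReal := by
  rw [gaussianReal_map_const_mul, mul_div_cancel₀ m hσ, mul_one]
  congr
  exact (max_eq_left (sq_nonneg σ)).symm

noncomputable def truncSqMean (a u : ℝ) : ℝ :=
  u ^ 2 * (centeredCdf (a - u) + centeredCdf (a + u)) -
    (a + u) * stdPhi (a - u) - (a - u) * stdPhi (a + u)

lemma hasDerivAt_truncSqPrimitive (u x : ℝ) :
    HasDerivAt (fun x => u ^ 2 * centeredCdf (x - u) - (x + u) * stdPhi (x - u))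
      ((x ^ 2 - 1) * stdPhi (x - u)) x := by
  have hs : HasDerivAt (fun x => x - u) 1 x := (hasDerivAt_id x).sub_const u
  have hΨ := (hasDerivAt_centeredCdf (x - u)).comp x hs
  have hφ := (hasDerivAt_stdPhi (x - u)).comp x hs
  exact ((hΨ.const_mul (u ^ 2)).sub (((hasDerivAt_id x).add_const u).mul hφ)).congr_deriv
    (by simp only [Function.comp_apply, id]; ring)

lemma integral_truncSq_gaussianReal_one {a : ℝ} (ha : 0 ≤ a) (u : ℝ) :
    ∫ x, truncSq 1 (a ^ 2) x ∂gaussianReal u 1 = truncSqMean a u := by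
  have hind : (fun x => gaussianPDFReal u 1 x • truncSq 1 (a ^ 2) x) =
      (Icc (-a) a).indicator fun x => (x ^ 2 - 1) * stdPhi (x - u) := by
    ext x
    rw [gaussianPDFReal_one_apply, smul_eq_mul, truncSq]
    by_cases hx : x ∈ Icc (-a) a
    · have : ¬ a ^ 2 < x ^ 2 := not_lt.2 (sq_le_sq' hx.1 hx.2)
      rw [indicator_of_mem hx, if_neg this, mul_comm]
    · have : a ^ 2 < x ^ 2 := by
        simp only [mem_Icc, not_and_or, not_le] at hx
        rcases hx with hx | hx <;> nlinarith
      rw [indicator_of_notMem hx, if_pos this, mul_zero]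
  rw [integral_gaussianReal_eq_integral_smul one_ne_zero, hind,
    MeasureTheory.integral_indicator measurableSet_Icc, integral_Icc_eq_integral_Ioc,
    ← integral_of_le (by linarith), integral_eq_sub_of_hasDerivAt
      (fun x _ => hasDerivAt_truncSqPrimitive u x)
      (Continuous.intervalIntegrable (by fun_prop) _ _)]
  have h1 : -a - u = -(a + u) := by ring
  rw [truncSqMean, h1, stdPhi_neg, centeredCdf_neg]
  ring

lemma truncSqMean_neg (a u : ℝ) : truncSqMean a (-u) = truncSqMean a u := by
  simp only [truncSqMean, sub_neg_eq_add, ← sub_eq_add_neg, neg_sq]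
  ring

lemma truncSqMean_zero (a : ℝ) : truncSqMean a 0 = -(2 * a * stdPhi a) := by
  simp only [truncSqMean, sub_zero, add_zero]; ring

lemma hasDerivAt_truncSqMean (a u : ℝ) :
    HasDerivAt (truncSqMean a)
      (2 * u * (centeredCdf (a - u) + centeredCdf (a + u)) -
        (1 + a ^ 2) * (stdPhi (a - u) - stdPhi (a + u))) u := by
  have hm : HasDerivAt (fun v => a - v) (-1) u := (hasDerivAt_id u).const_sub a
  have hp : HasDerivAt (fun v => a + v) 1 u := (hasDerivAt_id u).const_add a
  have hΨm := (hasDerivAt_centeredCdf (a - u)).comp u hm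
  have hΨp := (hasDerivAt_centeredCdf (a + u)).comp u hp
  have hφm := (hasDerivAt_stdPhi (a - u)).comp u hm
  have hφp := (hasDerivAt_stdPhi (a + u)).comp u hp
  exact ((((hasDerivAt_pow 2 u).mul (hΨm.add hΨp)).sub (hp.mul hφm)).sub (hm.mul hφp)).congr_deriv
    (by simp only [Function.comp_apply, Pi.add_apply]; push_cast; ring)

lemma truncSqMean_le_add_sq {a u : ℝ} (ha : 0 ≤ a) (hu : 0 ≤ u) :
    truncSqMean a u ≤ truncSqMean a 0 + u ^ 2 := by
  have hd (v : ℝ) := (hasDerivAt_pow 2 v).sub (hasDerivAt_truncSqMean a v)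
  have hmono : MonotoneOn (fun v => v ^ 2 - truncSqMean a v) (Ici 0) := by
    refine monotoneOn_of_hasDerivWithinAt_nonneg (convex_Ici 0)
      (fun v _ => (hd v).continuousAt.continuousWithinAt) (fun v _ => (hd v).hasDerivWithinAt)
      fun v hv => ?_
    rw [interior_Ici, mem_Ioi] at hv
    have := stdPhi_le_stdPhi (x := a - v) (y := a + v) (by nlinarith)
    have := centeredCdf_le_half (a - v)
    have := centeredCdf_le_half (a + v)
    push_cast
    nlinarith
  have := hmono self_mem_Ici hu hu
  simp only at this
  linarith

lemma one_add_sq_mul_sub_stdPhi_le {a u : ℝ} (ha : 1 ≤ a) (hu0 : 0 ≤ u) (hu1 : u ≤ 1) :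
    (1 + a ^ 2) * (stdPhi (a - u) - stdPhi (a + u)) ≤
      2 * u * (1 + centeredCdf (a - u) + centeredCdf (a + u)) := by
  have hΔ : stdPhi (a - u) - stdPhi (a + u) = ∫ x in (a - u)..(a + u), x * stdPhi x := by
    rw [integral_eq_sub_of_hasDerivAt (f := fun x => -stdPhi x)
      (fun x _ => (hasDerivAt_stdPhi x).neg.congr_deriv (neg_neg _))
      (Continuous.intervalIntegrable (by fun_prop) _ _)]
    ring
  have hΨ1 := centeredCdf_one_ge
  have hΨ := monotone_centeredCdf (show 1 ≤ a + u by linarith)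
  -- On `[a - u, a + u]`, `1 + a² ≤ x² + 2x + 2` when `a - u ≥ 1`, and `1 + a² ≤ 5` otherwise.
  obtain ⟨K, hK, hbound⟩ : ∃ K, K ≤ 1 + centeredCdf (a - u) + centeredCdf (a + u) ∧
      ∀ x ∈ Icc (a - u) (a + u), (1 + a ^ 2) * (x * stdPhi x) ≤ K := by
    rcases le_total 1 (a - u) with h | h
    · refine ⟨1.6, by linarith [monotone_centeredCdf h], fun x hx => ?_⟩
      have := cubic_mul_stdPhi_le x
      have : 1 + a ^ 2 ≤ x ^ 2 + 2 * x + 2 := by nlinarith [hx.1]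
      nlinarith [mul_nonneg (show 0 ≤ x by linarith [hx.1]) (stdPhi_pos x).le]
    · have := monotone_centeredCdf (show 0 ≤ a - u by linarith)
      refine ⟨1.3, by linarith [centeredCdf_zero], fun x hx => ?_⟩
      have := mul_stdPhi_le x
      have : 1 + a ^ 2 ≤ 5 := by nlinarith
      nlinarith [mul_nonneg (show 0 ≤ x by linarith [hx.1]) (stdPhi_pos x).le]
  calc (1 + a ^ 2) * (stdPhi (a - u) - stdPhi (a + u))
      = ∫ x in (a - u)..(a + u), (1 + a ^ 2) * (x * stdPhi x) := by
        rw [hΔ, intervalIntegral.integral_const_mul]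
    _ ≤ ∫ _ in (a - u)..(a + u), K :=
        integral_mono_on (by linarith) (Continuous.intervalIntegrable (by fun_prop) _ _)
          intervalIntegrable_const hbound
    _ = 2 * u * K := by rw [intervalIntegral.integral_const, smul_eq_mul]; ring
    _ ≤ _ := by gcongr

lemma sub_sq_le_truncSqMean {a u : ℝ} (ha : 1 ≤ a) (hu0 : 0 ≤ u) (hu1 : u ≤ 1) :
    truncSqMean a 0 - u ^ 2 ≤ truncSqMean a u := by
  have hd (v : ℝ) := (hasDerivAt_truncSqMean a v).add (hasDerivAt_pow 2 v)
  have hmono : MonotoneOn (fun v => truncSqMean a v + v ^ 2) (Icc 0 1) := by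
    refine monotoneOn_of_hasDerivWithinAt_nonneg (convex_Icc 0 1)
      (fun v _ => (hd v).continuousAt.continuousWithinAt) (fun v _ => (hd v).hasDerivWithinAt)
      fun v hv => ?_
    rw [interior_Icc] at hv
    have := one_add_sq_mul_sub_stdPhi_le ha hv.1.le hv.2.le
    push_cast
    nlinarith
  have := hmono (left_mem_Icc.2 zero_le_one) ⟨hu0, hu1⟩ hu0
  simp only at this
  linarith

lemma neg_one_le_truncSqMean {a : ℝ} (ha : 0 ≤ a) (u : ℝ) : -1 ≤ truncSqMean a u := by
  rw [← integral_truncSq_gaussianReal_one ha]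
  calc (-1 : ℝ) = ∫ _, -1 ∂gaussianReal u 1 := by simp
    _ ≤ _ := integral_mono (integrable_const _) (integrable_truncSq _ _)
        (neg_le_truncSq zero_le_one _)

lemma abs_truncSqMean_le {a : ℝ} (ha : 1 ≤ a) (u : ℝ) : |truncSqMean a u| ≤ a ^ 2 := by
  rw [← integral_truncSq_gaussianReal_one (by linarith)]
  have hb (x : ℝ) : ‖truncSq 1 (a ^ 2) x‖ ≤ a ^ 2 := abs_truncSq_le zero_le_one (by nlinarith) x
  simpa using norm_integral_le_of_norm_le_const (ae_of_all (gaussianReal u 1) hb)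

lemma abs_truncSqMean_sub_le_sq {a : ℝ} (ha : 1 ≤ a) (u : ℝ) :
    |truncSqMean a u - truncSqMean a 0| ≤ u ^ 2 := by
  wlog hu : 0 ≤ u generalizing u
  · simpa [truncSqMean_neg] using this (-u) (by linarith)
  rw [abs_le]
  refine ⟨?_, by linarith [truncSqMean_le_add_sq (zero_le_one.trans ha) hu]⟩
  rcases le_total u 1 with hu1 | hu1
  · linarith [sub_sq_le_truncSqMean ha hu hu1]
  · have := neg_one_le_truncSqMean (zero_le_one.trans ha) u
    have : truncSqMean a 0 ≤ 0 := by
      rw [truncSqMean_zero]; nlinarith [stdPhi_pos a]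
    nlinarith

lemma abs_truncSqMean_sub_le {a : ℝ} (ha : 1 ≤ a) (u : ℝ) :
    |truncSqMean a u - truncSqMean a 0| ≤ min (u ^ 2) (3 * a ^ 2) := by
  refine le_min (abs_truncSqMean_sub_le_sq ha u) ?_
  linarith [abs_sub (truncSqMean a u) (truncSqMean a 0), abs_truncSqMean_le ha u,
    abs_truncSqMean_le ha 0, sq_nonneg a]

lemma integral_truncSq_gaussianReal {σ τ : ℝ} (hσ : σ ≠ 0) (hτ : 0 ≤ τ) (m : ℝ) :
    ∫ x, truncSq (σ ^ 2) (σ ^ 2 * τ) x ∂gaussianReal m (σ ^ 2).toNNReal =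
      σ ^ 2 * truncSqMean (√τ) (m / σ) := by
  have h := integral_truncSq_gaussianReal_one (sqrt_nonneg τ) (m / σ)
  rw [sq_sqrt hτ] at h
  rw [← gaussianReal_map_const_mul_div hσ, integral_map (by fun_prop)
    (measurable_truncSq _ _).aestronglyMeasurable]
  simp_rw [truncSq_sq_mul hσ]
  rw [MeasureTheory.integral_const_mul, h]

lemma abs_integral_truncSq_sub_le {σ τ : ℝ} (hσ : σ ≠ 0) (hτ : 1 ≤ τ) (m : ℝ) :
    |∫ x, truncSq (σ ^ 2) (σ ^ 2 * τ) x ∂gaussianReal m (σ ^ 2).toNNReal -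
      ∫ x, truncSq (σ ^ 2) (σ ^ 2 * τ) x ∂gaussianReal 0 (σ ^ 2).toNNReal| ≤
      min (m ^ 2) (3 * σ ^ 2 * τ) := by
  rw [integral_truncSq_gaussianReal hσ (by linarith),
    integral_truncSq_gaussianReal hσ (by linarith), zero_div, ← mul_sub, abs_mul,
    abs_of_nonneg (sq_nonneg σ)]
  calc σ ^ 2 * |truncSqMean √τ (m / σ) - truncSqMean √τ 0|
      ≤ σ ^ 2 * min ((m / σ) ^ 2) (3 * √τ ^ 2) := by
        gcongr; exact abs_truncSqMean_sub_le (Real.one_le_sqrt.2 hτ) _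
    _ = min (m ^ 2) (3 * σ ^ 2 * τ) := by
        rw [mul_min_of_nonneg _ _ (sq_nonneg σ), sq_sqrt (by linarith), div_pow,
          mul_div_cancel₀ _ (pow_ne_zero 2 hσ)]
        ring_nf

lemma abs_mul_sub_sq_le {x y c A B : ℝ} (hx : |x - c| ≤ A) (hy : |y - c| ≤ B) :
    |x * y - c ^ 2| ≤ A * B + |c| * A + |c| * B := by
  have hA : 0 ≤ A := (abs_nonneg _).trans hx
  calc |x * y - c ^ 2| = |(x - c) * (y - c) + c * (x - c) + c * (y - c)| := by ring_nf
    _ ≤ |x - c| * |y - c| + |c| * |x - c| + |c| * |y - c| := by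
        simpa only [abs_mul] using abs_add_three ((x - c) * (y - c)) (c * (x - c)) (c * (y - c))
    _ ≤ A * B + |c| * A + |c| * B := by gcongr

theorem stmt17 (σ μ θ τ : ℝ) (hσ : 0 < σ) (hτ : 1 ≤ τ) :
    (∫ p : ℝ × ℝ,
        (if σ ^ 2 * τ < max (p.1 ^ 2) (p.2 ^ 2) then
          (p.1 ^ 2 - σ ^ 2) * (p.2 ^ 2 - σ ^ 2) else 0)
        ∂((gaussianReal 0 (σ ^ 2).toNNReal).prod (gaussianReal 0 (σ ^ 2).toNNReal))) =
      -4 * σ ^ 4 * τ * (stdPhi (Real.sqrt τ)) ^ 2 ∧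
    |(∫ p : ℝ × ℝ,
        (if σ ^ 2 * τ < max (p.1 ^ 2) (p.2 ^ 2) then
          (p.1 ^ 2 - σ ^ 2) * (p.2 ^ 2 - σ ^ 2) else 0)
        ∂((gaussianReal μ (σ ^ 2).toNNReal).prod (gaussianReal θ (σ ^ 2).toNNReal))) -
        (-4 * σ ^ 4 * τ * (stdPhi (Real.sqrt τ)) ^ 2) - μ ^ 2 * θ ^ 2| ≤
      min (μ ^ 2) (3 * σ ^ 2 * τ) * min (θ ^ 2) (3 * σ ^ 2 * τ) +
        2 * σ ^ 2 * Real.sqrt τ * stdPhi (Real.sqrt τ) * min (μ ^ 2) (3 * σ ^ 2 * τ) +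
        2 * σ ^ 2 * Real.sqrt τ * stdPhi (Real.sqrt τ) * min (θ ^ 2) (3 * σ ^ 2 * τ) := by
  set F : ℝ → ℝ := fun m => ∫ x, truncSq (σ ^ 2) (σ ^ 2 * τ) x ∂gaussianReal m (σ ^ 2).toNNReal
  have hmean (m : ℝ) : ∫ x, (x ^ 2 - σ ^ 2) ∂gaussianReal m (σ ^ 2).toNNReal = m ^ 2 := by
    have h := integral_sq_sub_gaussianReal m (σ ^ 2).toNNReal
    rwa [Real.coe_toNNReal _ (sq_nonneg σ)] at h
  have hprod (m n : ℝ) : ∫ p : ℝ × ℝ, (if σ ^ 2 * τ < max (p.1 ^ 2) (p.2 ^ 2) then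
      (p.1 ^ 2 - σ ^ 2) * (p.2 ^ 2 - σ ^ 2) else 0)
      ∂((gaussianReal m (σ ^ 2).toNNReal).prod (gaussianReal n (σ ^ 2).toNNReal)) =
      m ^ 2 * n ^ 2 - F m * F n := by
    rw [integral_prod_ite_lt_max_sq _ _ (integrable_sq_sub_gaussianReal _ _ _)
      (integrable_sq_sub_gaussianReal _ _ _), hmean, hmean]
  have hF0 : F 0 = -(2 * σ ^ 2 * √τ * stdPhi √τ) := by
    simp only [F, integral_truncSq_gaussianReal hσ.ne' (by linarith), zero_div, truncSqMean_zero]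
    ring
  have hF0sq : F 0 ^ 2 = 4 * σ ^ 4 * τ * stdPhi √τ ^ 2 := by
    rw [hF0, neg_sq, mul_pow, mul_pow, mul_pow, sq_sqrt (by linarith)]; ring
  have hF0abs : |F 0| = 2 * σ ^ 2 * √τ * stdPhi √τ := by
    rw [hF0, abs_neg, abs_of_nonneg (by have := stdPhi_pos √τ; positivity)]
  refine ⟨by rw [hprod]; linear_combination -hF0sq, ?_⟩
  have hexpand : μ ^ 2 * θ ^ 2 - F μ * F θ - (-4 * σ ^ 4 * τ * stdPhi √τ ^ 2) - μ ^ 2 * θ ^ 2 =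
      -(F μ * F θ - F 0 ^ 2) := by rw [hF0sq]; ring
  rw [hprod, hexpand, abs_neg, ← hF0abs]
  exact abs_mul_sub_sq_le (abs_integral_truncSq_sub_le hσ.ne' hτ μ)
    (abs_integral_truncSq_sub_le hσ.ne' hτ θ)
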